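/- arXiv:2510.16378 — 2 statements merged into one kernel-verified Lean document; each statement's English description precedes it below -/
import Mathlib

section
/- Let U ∈ C³([-1,1]) with ‖U − y‖_{H⁴} ≤ κ for κ sufficiently small, let k be a nonzero integer, λ_r ∈ ℝ, L ≥ 2, and let χ₁(y) = 1/((U(y) − λ_r) + i L^{-1}). Then: (i) ‖χ₁‖_{L^∞} ≤ C L; (ii) ‖χ₁‖_{L²} ≤ C L^{1/2}; (iii) ‖∂_y χ₁‖_{L^∞} ≤ C L²; and (iv) for every f ∈ H₀¹(-1,1), ‖χ₁ f‖_{L²} ≤ C L^{1/2} ‖f‖_{L²}^{1/2} ‖f'‖_{L²(w/ k-gradient)}^{1/2}, where the constants depend only on the bi-Lipschitz bounds of U (which follow from κ small). -/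
/-!
On `[-1, 1]` the identity `(‖f‖²)' = 2⟪f, f'⟫` and Cauchy–Schwarz give
`‖f x‖² ≤ ‖f t‖² + 2 ‖f‖₂ ‖f'‖₂`. Averaging over `t` is the Sobolev embedding, which turns
`‖U - y‖_{H⁴} ≤ κ ≤ 1/8` into `3/4 ≤ U' ≤ 5/4`; taking `t = -1` with `f(-1) = 0` is the Agmon
inequality `‖f‖_∞² ≤ 2 ‖f‖₂ ‖f'‖₂`.

Since `|χ₁|² = ((U - λ_r)² + L⁻²)⁻¹`, bound (i) is immediate and (iii) follows from
`χ₁' = -U' χ₁²`. For (ii), `U' ≥ 3/4` dominates `|χ₁|²` by `(4/3) U' |χ₁|²`, the derivative of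
`(4/3) L arctan (L (U - λ_r))`, which varies by at most `(4/3) π L`. Finally (iv) is
`∫ |χ₁ f|² ≤ ‖f‖_∞² ∫ |χ₁|²` combined with Agmon.
-/

open MeasureTheory

/-- The squared `H⁴(-1,1)` norm. -/
noncomputable def H4normSq (f : ℝ → ℝ) : ℝ :=
  ∑ j ∈ Finset.range 5, ∫ y in Set.Icc (-1 : ℝ) 1, (iteratedDeriv j f y) ^ 2

open Set

theorem integral_mul_le_sqrt_mul_sqrt {α : Type*} [MeasurableSpace α] {μ : Measure α}
    {u v : α → ℝ} (hu0 : 0 ≤ᵐ[μ] u) (hv0 : 0 ≤ᵐ[μ] v) (hu : MemLp u 2 μ) (hv : MemLp v 2 μ) :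
    ∫ x, u x * v x ∂μ ≤ √(∫ x, u x ^ 2 ∂μ) * √(∫ x, v x ^ 2 ∂μ) := by
  simpa [Real.sqrt_eq_rpow, Real.rpow_two] using
    integral_mul_le_Lp_mul_Lq_of_nonneg Real.HolderConjugate.two_two hu0 hv0
      (by simpa using hu) (by simpa using hv)

theorem Continuous.memLp_two_restrict_Icc {u : ℝ → ℝ} (hu : Continuous u) (a b : ℝ) :
    MemLp u 2 (volume.restrict (Icc a b)) :=
  (memLp_two_iff_integrable_sq hu.aestronglyMeasurable).2 (hu.pow 2).integrableOn_Icc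

section InnerProductSpace

variable {E : Type*} [NormedAddCommGroup E] [InnerProductSpace ℝ E]

theorem sq_norm_le_sq_norm_add_two_mul_integral {f : ℝ → E} (hf : ContDiff ℝ 1 f)
    {a b x t : ℝ} (hx : x ∈ Icc a b) (ht : t ∈ Icc a b) :
    ‖f x‖ ^ 2 ≤ ‖f t‖ ^ 2 + 2 * ∫ y in Icc a b, ‖f y‖ * ‖deriv f y‖ := by
  have hfc := hf.continuous
  have hf'c := hf.continuous_deriv le_rfl
  have hderiv : ∀ y, HasDerivAt (‖f ·‖ ^ 2) (2 * inner ℝ (f y) (deriv f y)) y := fun y =>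
    ((hf.differentiable one_ne_zero) y).hasDerivAt.norm_sq
  have hftc : ∫ y in t..x, 2 * inner ℝ (f y) (deriv f y) = ‖f x‖ ^ 2 - ‖f t‖ ^ 2 :=
    intervalIntegral.integral_eq_sub_of_hasDerivAt (fun y _ => hderiv y)
      ((continuous_const.mul (hfc.inner hf'c)).intervalIntegrable _ _)
  have hg : Continuous fun y => ‖f y‖ * ‖deriv f y‖ := hfc.norm.mul hf'c.norm
  have hsub : uIoc t x ⊆ Icc a b := Ioc_subset_Icc_self.trans
    (Icc_subset_Icc (le_min ht.1 hx.1) (max_le ht.2 hx.2))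
  calc ‖f x‖ ^ 2 = ‖f t‖ ^ 2 + ∫ y in t..x, 2 * inner ℝ (f y) (deriv f y) := by
        rw [hftc]; ring
    _ ≤ ‖f t‖ ^ 2 + ‖∫ y in uIoc t x, 2 * inner ℝ (f y) (deriv f y)‖ := by
        rw [← intervalIntegral.norm_intervalIntegral_eq]; gcongr; exact Real.le_norm_self _
    _ ≤ ‖f t‖ ^ 2 + ∫ y in uIoc t x, 2 * (‖f y‖ * ‖deriv f y‖) := by
        gcongr
        refine norm_integral_le_of_norm_le
          ((continuous_const.mul hg).integrableOn_Icc.mono_set hsub) (.of_forall fun y => ?_)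
        rw [norm_mul, Real.norm_two]
        gcongr
        exact norm_inner_le_norm _ _
    _ ≤ ‖f t‖ ^ 2 + 2 * ∫ y in Icc a b, ‖f y‖ * ‖deriv f y‖ := by
        rw [integral_const_mul]
        gcongr ‖f t‖ ^ 2 + 2 * ?_
        exact setIntegral_mono_set (hg.integrableOn_Icc (μ := volume))
          (.of_forall fun y => by positivity) hsub.eventuallyLE

theorem sq_norm_le_sq_norm_add_two_mul_sqrt_mul_sqrt {f : ℝ → E} (hf : ContDiff ℝ 1 f)
    {a b x t : ℝ} (hx : x ∈ Icc a b) (ht : t ∈ Icc a b) :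
    ‖f x‖ ^ 2 ≤ ‖f t‖ ^ 2 + 2 * √(∫ y in Icc a b, ‖f y‖ ^ 2) *
      √(∫ y in Icc a b, ‖deriv f y‖ ^ 2) := by
  have hcs := integral_mul_le_sqrt_mul_sqrt (.of_forall fun y => norm_nonneg (f y))
    (.of_forall fun y => norm_nonneg (deriv f y)) (hf.continuous.norm.memLp_two_restrict_Icc a b)
    ((hf.continuous_deriv le_rfl).norm.memLp_two_restrict_Icc a b)
  linarith [sq_norm_le_sq_norm_add_two_mul_integral hf hx ht]

theorem agmon_inequality {f : ℝ → E} (hf : ContDiff ℝ 1 f) {a b x : ℝ} (hfa : f a = 0)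
    (hx : x ∈ Icc a b) :
    ‖f x‖ ^ 2 ≤ 2 * √(∫ y in Icc a b, ‖f y‖ ^ 2) * √(∫ y in Icc a b, ‖deriv f y‖ ^ 2) := by
  simpa [hfa] using
    sq_norm_le_sq_norm_add_two_mul_sqrt_mul_sqrt hf hx (left_mem_Icc.2 (hx.1.trans hx.2))

theorem sub_mul_sq_norm_le {f : ℝ → E} (hf : ContDiff ℝ 1 f) {a b x : ℝ} (hx : x ∈ Icc a b) :
    (b - a) * ‖f x‖ ^ 2 ≤ (∫ y in Icc a b, ‖f y‖ ^ 2) + (b - a) * (2 *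
      √(∫ y in Icc a b, ‖f y‖ ^ 2) * √(∫ y in Icc a b, ‖deriv f y‖ ^ 2)) := by
  set K := 2 * √(∫ y in Icc a b, ‖f y‖ ^ 2) * √(∫ y in Icc a b, ‖deriv f y‖ ^ 2)
  have hab : volume.real (Icc a b) = b - a := Real.volume_real_Icc_of_le (hx.1.trans hx.2)
  have hf2 : Continuous fun y => ‖f y‖ ^ 2 := hf.continuous.norm.pow 2
  calc (b - a) * ‖f x‖ ^ 2 = ∫ _ in Icc a b, ‖f x‖ ^ 2 := by
        rw [setIntegral_const, hab, smul_eq_mul]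
    _ ≤ ∫ t in Icc a b, (‖f t‖ ^ 2 + K) :=
        setIntegral_mono_on continuous_const.integrableOn_Icc
          (hf2.add continuous_const).integrableOn_Icc measurableSet_Icc
          fun t ht => sq_norm_le_sq_norm_add_two_mul_sqrt_mul_sqrt hf hx ht
    _ = (∫ y in Icc a b, ‖f y‖ ^ 2) + (b - a) * K := by
        rw [integral_add hf2.integrableOn_Icc continuous_const.integrableOn_Icc,
          setIntegral_const, hab, smul_eq_mul]

theorem norm_le_of_sqrt_integral_sq_le {f : ℝ → E} (hf : ContDiff ℝ 1 f) {κ : ℝ}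
    (hf₀ : √(∫ y in Icc (-1 : ℝ) 1, ‖f y‖ ^ 2) ≤ κ)
    (hf₁ : √(∫ y in Icc (-1 : ℝ) 1, ‖deriv f y‖ ^ 2) ≤ κ) {x : ℝ} (hx : x ∈ Icc (-1 : ℝ) 1) :
    ‖f x‖ ≤ 2 * κ := by
  have hS := Real.sqrt_nonneg (∫ y in Icc (-1 : ℝ) 1, ‖f y‖ ^ 2)
  have hT := Real.sqrt_nonneg (∫ y in Icc (-1 : ℝ) 1, ‖deriv f y‖ ^ 2)
  have hSsq := Real.sq_sqrt (integral_nonneg fun y => sq_nonneg ‖f y‖ :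
    0 ≤ ∫ y in Icc (-1 : ℝ) 1, ‖f y‖ ^ 2)
  have hκ : 0 ≤ κ := hS.trans hf₀
  have hsob := sub_mul_sq_norm_le hf hx
  refine (pow_le_pow_iff_left₀ (norm_nonneg _) (by positivity) two_ne_zero).1 ?_
  nlinarith [mul_le_mul hf₀ hf₁ hT hκ, mul_le_mul hf₀ hf₀ hS hκ]

theorem sqrt_integral_sq_norm_deriv_le_sqrt_integral_add {f : ℝ → E} (hf : ContDiff ℝ 1 f)
    (a b : ℝ) {c : ℝ} (hc : 0 ≤ c) :
    √(∫ y in Icc a b, ‖deriv f y‖ ^ 2) ≤ √(∫ y in Icc a b, (‖deriv f y‖ ^ 2 + c * ‖f y‖ ^ 2)) :=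
  have hf'2 := (hf.continuous_deriv le_rfl).norm.pow 2
  Real.sqrt_le_sqrt <| setIntegral_mono_on hf'2.integrableOn_Icc
    (hf'2.add (continuous_const.mul (hf.continuous.norm.pow 2))).integrableOn_Icc
    measurableSet_Icc fun y _ => le_add_of_nonneg_right (by positivity)

end InnerProductSpace

theorem sqrt_integral_sq_iteratedDeriv_le_sqrt_H4normSq (f : ℝ → ℝ) {j : ℕ} (hj : j < 5) :
    √(∫ y in Icc (-1 : ℝ) 1, (iteratedDeriv j f y) ^ 2) ≤ √(H4normSq f) :=
  Real.sqrt_le_sqrt <|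
    Finset.single_le_sum (f := fun j => ∫ y in Icc (-1 : ℝ) 1, (iteratedDeriv j f y) ^ 2)
      (fun _ _ => integral_nonneg fun _ => sq_nonneg _) (Finset.mem_range.2 hj)

theorem deriv_sub_id {U : ℝ → ℝ} (hU : Differentiable ℝ U) :
    deriv (fun y => U y - y) = fun y => deriv U y - 1 := by
  funext y
  rw [deriv_fun_sub (hU y) differentiableAt_fun_id, deriv_id'']

theorem abs_deriv_sub_one_le_of_sqrt_H4normSq_le {U : ℝ → ℝ} (hU : ContDiff ℝ 2 U) {κ : ℝ}
    (hUκ : √(H4normSq (fun y => U y - y)) ≤ κ) {y : ℝ} (hy : y ∈ Icc (-1 : ℝ) 1) :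
    |deriv U y - 1| ≤ 2 * κ := by
  obtain ⟨hUd, -, hU'⟩ := (contDiff_succ_iff_deriv (n := 1)).1 hU
  have hg1 : iteratedDeriv 1 (fun y => U y - y) = fun y => deriv U y - 1 := by
    rw [iteratedDeriv_one, deriv_sub_id hUd]
  have hg2 : iteratedDeriv 2 (fun y => U y - y) = deriv fun y => deriv U y - 1 := by
    rw [iteratedDeriv_succ, hg1]
  have h1 := sqrt_integral_sq_iteratedDeriv_le_sqrt_H4normSq (fun y => U y - y) (j := 1)
    (by norm_num)
  have h2 := sqrt_integral_sq_iteratedDeriv_le_sqrt_H4normSq (fun y => U y - y) (j := 2)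
    (by norm_num)
  rw [hg1] at h1
  rw [hg2] at h2
  simpa using norm_le_of_sqrt_integral_sq_le (hU'.sub contDiff_const)
    (by simpa using h1.trans hUκ) (by simpa using h2.trans hUκ) hy

theorem integral_inv_sq_add_sq_le {U : ℝ → ℝ} (hU : ContDiff ℝ 1 U) {a b c δ : ℝ} (hab : a ≤ b)
    (hc : 0 < c) (hU' : ∀ y ∈ Icc a b, c ≤ deriv U y) (hδ : 0 < δ) (lamr : ℝ) :
    ∫ y in Icc a b, ((U y - lamr) ^ 2 + δ ^ 2)⁻¹ ≤ Real.pi / (c * δ) := by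
  have hUc := hU.continuous
  have hpos : ∀ y, 0 < (U y - lamr) ^ 2 + δ ^ 2 := fun y => by positivity
  set F' : ℝ → ℝ := fun y => deriv U y / ((U y - lamr) ^ 2 + δ ^ 2)
  have hF : ∀ y, HasDerivAt (fun y => Real.arctan ((U y - lamr) / δ) / δ) (F' y) y := by
    intro y
    refine ((((hU.differentiable one_ne_zero y).hasDerivAt.sub_const lamr).div_const
      δ).arctan.div_const δ).congr_deriv ?_
    have hne := (hpos y).ne'
    simp only [F']
    field_simp
    ring
  have hF'c : Continuous F' :=
    (hU.continuous_deriv le_rfl).div ((hUc.sub continuous_const).pow 2 |>.add continuous_const)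
      fun y => (hpos y).ne'
  have hftc : ∫ y in Icc a b, F' y =
      Real.arctan ((U b - lamr) / δ) / δ - Real.arctan ((U a - lamr) / δ) / δ := by
    rw [integral_Icc_eq_integral_Ioc, ← intervalIntegral.integral_of_le hab]
    exact intervalIntegral.integral_eq_sub_of_hasDerivAt (fun y _ => hF y)
      (hF'c.intervalIntegrable _ _)
  calc ∫ y in Icc a b, ((U y - lamr) ^ 2 + δ ^ 2)⁻¹ ≤ ∫ y in Icc a b, F' y / c :=
        setIntegral_mono_on (((hUc.sub continuous_const).pow 2 |>.add continuous_const).inv₀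
          fun y => (hpos y).ne').integrableOn_Icc (hF'c.div_const c).integrableOn_Icc
          measurableSet_Icc fun y hy => by
            rw [le_div_iff₀ hc, inv_mul_eq_div]
            exact div_le_div_of_nonneg_right (hU' y hy) (hpos y).le
    _ = (Real.arctan ((U b - lamr) / δ) - Real.arctan ((U a - lamr) / δ)) / (c * δ) := by
        rw [integral_div, hftc]; field_simp
    _ ≤ Real.pi / (c * δ) := by
        gcongr
        linarith [Real.arctan_lt_pi_div_two ((U b - lamr) / δ),
          Real.neg_pi_div_two_lt_arctan ((U a - lamr) / δ)]

noncomputable def chiOne (U : ℝ → ℝ) (lamr L y : ℝ) : ℂ :=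
  (((U y - lamr : ℝ) : ℂ) + Complex.I * (L : ℂ)⁻¹)⁻¹

section chiOne

variable {U : ℝ → ℝ} {lamr L : ℝ}

theorem sq_norm_chiOne (U : ℝ → ℝ) (lamr L y : ℝ) :
    ‖chiOne U lamr L y‖ ^ 2 = ((U y - lamr) ^ 2 + L⁻¹ ^ 2)⁻¹ := by
  rw [chiOne, norm_inv, inv_pow, Complex.sq_norm, Complex.normSq_apply]
  simp [pow_two]

theorem norm_chiOne_le (hL : 0 < L) (y : ℝ) : ‖chiOne U lamr L y‖ ≤ L := by
  refine (pow_le_pow_iff_left₀ (norm_nonneg _) hL.le two_ne_zero).1 ?_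
  rw [sq_norm_chiOne, ← inv_inv (L ^ 2), inv_pow]
  exact inv_anti₀ (by positivity) (le_add_of_nonneg_left (sq_nonneg _))

theorem chiOne_denom_ne_zero (hL : L ≠ 0) (y : ℝ) :
    ((U y - lamr : ℝ) : ℂ) + Complex.I * (L : ℂ)⁻¹ ≠ 0 := by
  intro h
  have := congrArg Complex.im h
  simp [hL] at this

theorem continuous_chiOne (hU : Continuous U) (hL : L ≠ 0) : Continuous (chiOne U lamr L) :=
  ((Complex.continuous_ofReal.comp (hU.sub continuous_const)).add continuous_const).inv₀
    (chiOne_denom_ne_zero hL)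

theorem hasDerivAt_chiOne {u' y : ℝ} (hU : HasDerivAt U u' y) (hL : L ≠ 0) :
    HasDerivAt (chiOne U lamr L) (-u' * chiOne U lamr L y ^ 2) y := by
  have hden : HasDerivAt (fun y => ((U y - lamr : ℝ) : ℂ) + Complex.I * (L : ℂ)⁻¹) u' y :=
    ((hU.sub_const lamr).ofReal_comp).add_const _
  refine (hden.inv (chiOne_denom_ne_zero hL y)).congr_deriv ?_
  simp [chiOne, div_eq_mul_inv]

theorem norm_deriv_chiOne_le {y : ℝ} (hU : DifferentiableAt ℝ U y) (hL : 0 < L) :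
    ‖deriv (chiOne U lamr L) y‖ ≤ |deriv U y| * L ^ 2 := by
  rw [(hasDerivAt_chiOne hU.hasDerivAt hL.ne').deriv, norm_mul, norm_neg, Complex.norm_real,
    Real.norm_eq_abs, norm_pow]
  gcongr
  exact norm_chiOne_le hL y

theorem integral_sq_norm_chiOne_le (hU : ContDiff ℝ 1 U) {a b c : ℝ} (hab : a ≤ b) (hc : 0 < c)
    (hU' : ∀ y ∈ Icc a b, c ≤ deriv U y) (hL : 0 < L) :
    ∫ y in Icc a b, ‖chiOne U lamr L y‖ ^ 2 ≤ Real.pi * L / c := by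
  simp_rw [sq_norm_chiOne]
  convert integral_inv_sq_add_sq_le hU hab hc hU' (inv_pos.2 hL) lamr using 1
  field_simp

end chiOne

theorem integral_sq_norm_mul_le_agmon {χ f : ℝ → ℂ} (hχ : Continuous χ) (hf : ContDiff ℝ 1 f)
    {a b : ℝ} (hfa : f a = 0) :
    ∫ y in Icc a b, ‖χ y * f y‖ ^ 2 ≤ (∫ y in Icc a b, ‖χ y‖ ^ 2) *
      (2 * √(∫ y in Icc a b, ‖f y‖ ^ 2) * √(∫ y in Icc a b, ‖deriv f y‖ ^ 2)) := by
  rw [← integral_mul_const]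
  refine setIntegral_mono_on ((hχ.mul hf.continuous).norm.pow 2).integrableOn_Icc
    ((hχ.norm.pow 2).mul continuous_const).integrableOn_Icc measurableSet_Icc fun y hy => ?_
  rw [norm_mul, mul_pow]
  gcongr
  exact agmon_inequality hf hfa hy

/-- bounds for the regularized symbol inverse
`χ₁(y) = 1/((U(y) − λ_r) + iL⁻¹)` when `‖U − y‖_{H⁴} ≤ κ` is small:
(i) `‖χ₁‖_∞ ≤ CL`; (ii) `‖χ₁‖_{L²} ≤ CL^{1/2}`; (iii) `‖∂_yχ₁‖_∞ ≤ CL²`;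
(iv) `‖χ₁ f‖_{L²} ≤ CL^{1/2}‖f‖_{L²}^{1/2}‖∇_k f‖_{L²}^{1/2}` for `f ∈ H₀¹`. -/
theorem chi_one_bounds :
    ∃ κ₀ : ℝ, 0 < κ₀ ∧ ∃ C : ℝ, 0 < C ∧
      ∀ (κ : ℝ), 0 < κ → κ ≤ κ₀ →
      ∀ (U : ℝ → ℝ), ContDiff ℝ 4 U →
        Real.sqrt (H4normSq (fun y => U y - y)) ≤ κ →
      ∀ (k : ℤ), k ≠ 0 →
      ∀ (lamr L : ℝ), 2 ≤ L →
      ∀ (chi : ℝ → ℂ),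
        (∀ y : ℝ, chi y = (((U y - lamr : ℝ) : ℂ) + Complex.I * (L : ℂ)⁻¹)⁻¹) →
        (∀ y ∈ Set.Icc (-1 : ℝ) 1, ‖chi y‖ ≤ C * L) ∧
        (Real.sqrt (∫ y in Set.Icc (-1 : ℝ) 1, ‖chi y‖ ^ 2) ≤ C * Real.sqrt L) ∧
        (∀ y ∈ Set.Icc (-1 : ℝ) 1, ‖deriv chi y‖ ≤ C * L ^ 2) ∧
        (∀ f : ℝ → ℂ, ContDiff ℝ 1 f → f 1 = 0 → f (-1) = 0 →
          Real.sqrt (∫ y in Set.Icc (-1 : ℝ) 1, ‖chi y * f y‖ ^ 2)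
            ≤ C * Real.sqrt L *
              Real.sqrt (Real.sqrt (∫ y in Set.Icc (-1 : ℝ) 1, ‖f y‖ ^ 2) *
                Real.sqrt (∫ y in Set.Icc (-1 : ℝ) 1,
                  (‖deriv f y‖ ^ 2 + (k : ℝ) ^ 2 * ‖f y‖ ^ 2)))) := by
  refine ⟨1 / 8, by norm_num, 4, by norm_num, ?_⟩
  intro κ _ hκ U hU hUκ k _ lamr L hL chi hchi
  obtain rfl : chi = chiOne U lamr L := funext hchi
  have hL0 : 0 < L := by linarith
  have hU1 : ContDiff ℝ 1 U := hU.of_le (by norm_num)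
  have hU' : ∀ y ∈ Icc (-1 : ℝ) 1, 3 / 4 ≤ deriv U y ∧ |deriv U y| ≤ 5 / 4 := fun y hy => by
    have := abs_le.1 (abs_deriv_sub_one_le_of_sqrt_H4normSq_le (hU.of_le (by norm_num)) hUκ hy)
    exact ⟨by linarith, abs_le.2 ⟨by linarith, by linarith⟩⟩
  have hL2 : ∫ y in Icc (-1 : ℝ) 1, ‖chiOne U lamr L y‖ ^ 2 ≤ 6 * L := by
    refine (integral_sq_norm_chiOne_le hU1 (by norm_num) (by norm_num) (fun y hy => (hU' y hy).1)
      hL0).trans ?_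
    rw [div_le_iff₀ (by norm_num)]
    nlinarith [Real.pi_le_four]
  refine ⟨fun y _ => by linarith [norm_chiOne_le (U := U) (lamr := lamr) hL0 y], ?_,
    fun y hy => ?_, fun f hf _ hfm1 => ?_⟩
  · refine Real.sqrt_le_iff.2 ⟨by positivity, ?_⟩
    rw [mul_pow, Real.sq_sqrt hL0.le]
    linarith
  · refine (norm_deriv_chiOne_le (hU1.differentiable one_ne_zero y) hL0).trans ?_
    nlinarith [(hU' y hy).2]
  · set S := √(∫ y in Icc (-1 : ℝ) 1, ‖f y‖ ^ 2)
    set T := √(∫ y in Icc (-1 : ℝ) 1, (‖deriv f y‖ ^ 2 + (k : ℝ) ^ 2 * ‖f y‖ ^ 2))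
    have hT := sqrt_integral_sq_norm_deriv_le_sqrt_integral_add hf (-1) 1 (sq_nonneg (k : ℝ))
    have hST : 0 ≤ S * T := by positivity
    refine Real.sqrt_le_iff.2 ⟨by positivity, ?_⟩
    calc ∫ y in Icc (-1 : ℝ) 1, ‖chiOne U lamr L y * f y‖ ^ 2
        ≤ (∫ y in Icc (-1 : ℝ) 1, ‖chiOne U lamr L y‖ ^ 2) *
          (2 * S * √(∫ y in Icc (-1 : ℝ) 1, ‖deriv f y‖ ^ 2)) :=
          integral_sq_norm_mul_le_agmon (continuous_chiOne hU1.continuous hL0.ne') hf hfm1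
      _ ≤ 6 * L * (2 * S * T) := by gcongr
      _ ≤ (4 * √L * √(S * T)) ^ 2 := by
          rw [mul_pow, mul_pow, Real.sq_sqrt hL0.le, Real.sq_sqrt hST]
          nlinarith [mul_nonneg hL0.le hST]
end

section
/- Let k ≥ 1 be an integer, L ≥ 2, L_* ≥ L, and define χ*₊(y) = max{0, L_*(y − 1 + L_*^{-1})} on [-1,1]. Let G_k be the Dirichlet Green's function of ∂_y² − k² on (-1,1). Then ‖Δ_k^{-1}(U'' χ*₊)‖_{L²} ≤ C ‖U''‖_{L^∞} L_*^{-2}, where Δ_k^{-1} f (y) = ∫_{-1}^1 G_k(y,y') f(y') dy' and the constant C is universal; the key kernel bound is sup_{y,y'} |G_k(y,y')| / (1 − max{y,y'}) ≤ C. -/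
/-!
Writing the kernel as `-sinh (k (1 - max y y')) sinh (k (1 + min y y')) / (k sinh 2k)` and
bounding `sinh a ≤ a eᵃ`, `sinh b ≤ eᵇ / 2` and `e^{2k} ≤ 4 sinh 2k` gives `|G_k(y, y')| ≤ 2 (1 - max y y')`
uniformly in `k ≥ 1`. On the support `[1 - L_*⁻¹, 1]` of `χ*₊` this is at most `2 L_*⁻¹`, so
the Green operator applied to `U'' χ*₊` is pointwise `O(‖U''‖_∞ L_*⁻²)`, and so is its `L²` norm on
the bounded interval `[-1, 1]`.
-/

open MeasureTheory

/-- The Dirichlet Green's function for `∂_y² − k²` on `[-1,1]`. -/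
noncomputable def greenKernel (k : ℤ) (y y' : ℝ) : ℝ :=
  if y ≤ y' then
    -(1 / ((k : ℝ) * Real.sinh (2 * (k : ℝ)))) *
      (Real.sinh ((k : ℝ) * (1 - y')) * Real.sinh ((k : ℝ) * (1 + y)))
  else
    -(1 / ((k : ℝ) * Real.sinh (2 * (k : ℝ)))) *
      (Real.sinh ((k : ℝ) * (1 - y)) * Real.sinh ((k : ℝ) * (1 + y')))

/-- The boundary cutoff `χ*₊(y) = max{0, L_*(y − 1 + L_*⁻¹)}`. -/
noncomputable def chiStar (Ls y : ℝ) : ℝ := max 0 (Ls * (y - 1 + Ls⁻¹))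

open Set

namespace Real

theorem sinh_le_mul_exp (a : ℝ) : sinh a ≤ a * exp a := by
  have hexp : 1 - 2 * a ≤ exp (-a) * exp (-a) := by
    rw [← exp_add]
    linarith [add_one_le_exp (-a + -a)]
  have hinv : exp a * exp (-a) = 1 := by rw [← exp_add, add_neg_cancel, exp_zero]
  rw [sinh_eq]
  nlinarith [exp_pos a, exp_pos (-a)]

theorem sinh_le_exp_div_two (b : ℝ) : sinh b ≤ exp b / 2 := by
  rw [sinh_eq]
  linarith [exp_pos (-b)]

theorem exp_le_four_mul_sinh {x : ℝ} (hx : 1 / 2 ≤ x) : exp x ≤ 4 * sinh x := by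
  have hsq : 2 ≤ exp x * exp x := by
    rw [← exp_add]
    linarith [add_one_le_exp 1, exp_le_exp.mpr (show (1 : ℝ) ≤ x + x by linarith)]
  have hinv : exp x * exp (-x) = 1 := by rw [← exp_add, add_neg_cancel, exp_zero]
  rw [sinh_eq]
  nlinarith [exp_pos x, exp_pos (-x)]

theorem sinh_mul_sinh_le {a b c : ℝ} (ha : 0 ≤ a) (hb : 0 ≤ b) (habc : a + b ≤ c)
    (hc : 1 / 2 ≤ c) : sinh a * sinh b ≤ 2 * a * sinh c :=
  calc sinh a * sinh b ≤ (a * exp a) * (exp b / 2) :=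
        mul_le_mul (sinh_le_mul_exp a) (sinh_le_exp_div_two b) (sinh_nonneg_iff.mpr hb)
          (by positivity)
    _ = a / 2 * exp (a + b) := by rw [exp_add]; ring
    _ ≤ a / 2 * (4 * sinh c) := by
        gcongr
        exact (exp_le_exp.mpr habc).trans (exp_le_four_mul_sinh hc)
    _ = 2 * a * sinh c := by ring

end Real

open Real

theorem greenKernel_eq_max_min (k : ℤ) (y y' : ℝ) :
    greenKernel k y y' =
      -(sinh (k * (1 - max y y')) * sinh (k * (1 + min y y')) / (k * sinh (2 * k))) := by
  unfold greenKernel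
  split_ifs with h
  · rw [max_eq_right h, min_eq_left h]; ring
  · rw [max_eq_left (not_le.mp h).le, min_eq_right (not_le.mp h).le]; ring

theorem abs_greenKernel_le {k : ℤ} (hk : 1 ≤ k) {y y' : ℝ}
    (hy : y ∈ Icc (-1 : ℝ) 1) (hy' : y' ∈ Icc (-1 : ℝ) 1) :
    |greenKernel k y y'| ≤ 2 * (1 - max y y') := by
  have hk' : (1 : ℝ) ≤ k := by exact_mod_cast hk
  have hmax : max y y' ≤ 1 := max_le hy.2 hy'.2
  have hmin : -1 ≤ min y y' := le_min hy.1 hy'.1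
  have ha : 0 ≤ (k : ℝ) * (1 - max y y') := by nlinarith
  have hb : 0 ≤ (k : ℝ) * (1 + min y y') := by nlinarith
  have hsum : (k : ℝ) * (1 - max y y') + k * (1 + min y y') ≤ 2 * k := by
    nlinarith [min_le_max (a := y) (b := y')]
  have hden : 0 < (k : ℝ) * sinh (2 * k) := by
    have : 0 < sinh (2 * (k : ℝ)) := sinh_pos_iff.mpr (by linarith)
    positivity
  rw [greenKernel_eq_max_min, abs_neg, abs_of_nonneg (div_nonneg (mul_nonneg
    (sinh_nonneg_iff.mpr ha) (sinh_nonneg_iff.mpr hb)) hden.le), div_le_iff₀ hden]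
  calc _ ≤ 2 * ((k : ℝ) * (1 - max y y')) * sinh (2 * k) :=
        sinh_mul_sinh_le ha hb hsum (by linarith)
    _ = _ := by ring

theorem abs_setIntegral_greenKernel_mul_le {k : ℤ} (hk : 1 ≤ k) {δ A : ℝ} (hδ₀ : 0 ≤ δ)
    (hδ : δ ≤ 2) {f : ℝ → ℝ} (hfA : ∀ y ∈ Icc (-1 : ℝ) 1, |f y| ≤ A)
    (hf₀ : ∀ y ∈ Icc (-1 : ℝ) 1, y < 1 - δ → f y = 0) {y : ℝ} (hy : y ∈ Icc (-1 : ℝ) 1) :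
    |∫ y' in Icc (-1 : ℝ) 1, greenKernel k y y' * f y'| ≤ 2 * A * δ ^ 2 := by
  have hlayer : Icc (1 - δ) 1 ⊆ Icc (-1 : ℝ) 1 := Icc_subset_Icc (by linarith) le_rfl
  rw [setIntegral_eq_of_subset_of_forall_sdiff_eq_zero measurableSet_Icc hlayer
    fun y' ⟨hy', hy'δ⟩ => by
      rw [hf₀ y' hy' (lt_of_not_ge fun h => hy'δ ⟨h, hy'.2⟩), mul_zero]]
  have hbound : ∀ y' ∈ Icc (1 - δ) 1, ‖greenKernel k y y' * f y'‖ ≤ 2 * δ * A := by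
    intro y' hy'
    have hG : |greenKernel k y y'| ≤ 2 * δ :=
      (abs_greenKernel_le hk hy (hlayer hy')).trans (by linarith [le_max_right y y', hy'.1])
    rw [Real.norm_eq_abs, abs_mul]
    exact mul_le_mul hG (hfA y' (hlayer hy')) (abs_nonneg _) (by positivity)
  calc _ ≤ 2 * δ * A * volume.real (Icc (1 - δ) 1) :=
        norm_setIntegral_le_of_norm_le_const measure_Icc_lt_top hbound
    _ = 2 * A * δ ^ 2 := by rw [Real.volume_real_Icc_of_le (by linarith)]; ring

theorem sqrt_setIntegral_sq_le {α : Type*} [MeasurableSpace α] {μ : Measure α} {s : Set α}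
    (hs : μ s < ⊤) {F : α → ℝ} {B : ℝ} (hB : 0 ≤ B) (hF : ∀ x ∈ s, |F x| ≤ B) :
    √(∫ x in s, F x ^ 2 ∂μ) ≤ √(μ.real s) * B := by
  have hint : ∫ x in s, F x ^ 2 ∂μ ≤ B ^ 2 * μ.real s := by
    refine (le_abs_self _).trans ?_
    rw [← Real.norm_eq_abs]
    refine norm_setIntegral_le_of_norm_le_const hs fun x hx => ?_
    rw [Real.norm_eq_abs, abs_pow]
    exact pow_le_pow_left₀ (abs_nonneg _) (hF x hx) 2
  calc _ ≤ √(B ^ 2 * μ.real s) := Real.sqrt_le_sqrt hint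
    _ = √(μ.real s) * B := by rw [Real.sqrt_mul (sq_nonneg B), Real.sqrt_sq hB, mul_comm]

theorem chiStar_eq_zero {Ls y : ℝ} (hLs : 0 ≤ Ls) (hy : y ≤ 1 - Ls⁻¹) : chiStar Ls y = 0 :=
  max_eq_left (mul_nonpos_of_nonneg_of_nonpos hLs (by linarith))

theorem chiStar_mem_Icc {Ls y : ℝ} (hLs : 0 ≤ Ls) (hy : y ≤ 1) : chiStar Ls y ∈ Icc 0 1 := by
  refine ⟨le_max_left _ _, max_le zero_le_one ?_⟩
  rw [mul_add, mul_sub, mul_one]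
  nlinarith [mul_inv_le_one (a := Ls)]

/-- the kernel bound `|G_k(y,y')| ≤ C(1 − max{y,y'})` (uniform in `k ≥ 1`)
and the resulting estimate `‖Δ_k⁻¹(U'' χ*₊)‖_{L²} ≤ C‖U''‖_∞ L_*⁻²` for the boundary
cutoff `χ*₊`, where `L_* ≥ L ≥ 2`. -/
theorem boundary_cutoff_green_bound :
    ∃ C : ℝ, 0 < C ∧
      ∀ (k : ℤ), 1 ≤ k →
      ∀ (L Ls : ℝ), 2 ≤ L → L ≤ Ls →
      ∀ (U : ℝ → ℝ), ContDiff ℝ 2 U →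
      ∀ (M : ℝ), 0 ≤ M → (∀ y ∈ Set.Icc (-1 : ℝ) 1, |iteratedDeriv 2 U y| ≤ M) →
        (∀ y ∈ Set.Icc (-1 : ℝ) 1, ∀ y' ∈ Set.Icc (-1 : ℝ) 1,
          |greenKernel k y y'| ≤ C * (1 - max y y')) ∧
        Real.sqrt (∫ y in Set.Icc (-1 : ℝ) 1,
            (∫ y' in Set.Icc (-1 : ℝ) 1,
              greenKernel k y y' * (iteratedDeriv 2 U y' * chiStar Ls y')) ^ 2)
          ≤ C * M * Ls⁻¹ ^ 2 := by
  refine ⟨4, by norm_num, fun k hk L Ls hL hLs U _ M hM hUM => ⟨fun y hy y' hy' => ?_, ?_⟩⟩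
  · linarith [abs_greenKernel_le hk hy hy', max_le hy.2 hy'.2]
  have hLs₀ : 0 ≤ Ls := by linarith
  have hLs_inv : Ls⁻¹ ≤ 2 := (inv_le_one_of_one_le₀ (by linarith)).trans one_le_two
  have hfM : ∀ y ∈ Icc (-1 : ℝ) 1, |iteratedDeriv 2 U y * chiStar Ls y| ≤ M := fun y hy => by
    obtain ⟨hχ₀, hχ₁⟩ := chiStar_mem_Icc hLs₀ hy.2
    rw [abs_mul, abs_of_nonneg hχ₀]
    nlinarith [hUM y hy, abs_nonneg (iteratedDeriv 2 U y)]
  have hf₀ : ∀ y ∈ Icc (-1 : ℝ) 1, y < 1 - Ls⁻¹ → iteratedDeriv 2 U y * chiStar Ls y = 0 :=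
    fun y _ hy => by rw [chiStar_eq_zero hLs₀ hy.le, mul_zero]
  calc _ ≤ √(volume.real (Icc (-1 : ℝ) 1)) * (2 * M * Ls⁻¹ ^ 2) :=
        sqrt_setIntegral_sq_le measure_Icc_lt_top (by positivity) fun y hy =>
          abs_setIntegral_greenKernel_mul_le hk (by positivity) hLs_inv hfM hf₀ hy
    _ ≤ 2 * (2 * M * Ls⁻¹ ^ 2) := by
        gcongr
        rw [Real.volume_real_Icc_of_le (by norm_num), Real.sqrt_le_left (by norm_num)]
        norm_num
    _ = 4 * M * Ls⁻¹ ^ 2 := by ring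
end
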